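/- Let G be a stable weighted multigraph of genus g and let d be a semistable multidegree on G of total degree δ ≤ g − 2. Then there exist effective multidegrees e and e′ on G such that d + e is a semistable multidegree of total degree g − 2 and d + e′ is a semistable multidegree of total degree g − 1. -/

import Mathlib

open Finset

/-- A multigraph on vertex type `V` with edge type `E`: each edge `e` joins the
(possibly equal) vertices `fst e` and `snd e` (loops and multiple edges allowed). -/
structure Multigraph (V E : Type) where
  fst : E → V
  snd : E → V

/-- An orientation of a multigraph: each edge gets a tail and a head, which are its
two endpoints (in one of the two possible orders). -/
structure GraphOrientation {V E : Type} (G : Multigraph V E) where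
  tail : E → V
  head : E → V
  compat : ∀ e, (tail e = G.fst e ∧ head e = G.snd e) ∨ (tail e = G.snd e ∧ head e = G.fst e)

variable {V E : Type} [Fintype V] [Fintype E] [DecidableEq V] [DecidableEq E]

namespace Multigraph

/-- `E(S)`: the set of edges with both endpoints in `S`. -/
def edgesIn (G : Multigraph V E) (S : Finset V) : Finset E :=
  univ.filter fun e => G.fst e ∈ S ∧ G.snd e ∈ S

/-- Membership in the cut of `S`: exactly one endpoint of `e` lies in `S`. -/
def InCut (G : Multigraph V E) (S : Finset V) (e : E) : Prop :=
  (G.fst e ∈ S ∧ G.snd e ∉ S) ∨ (G.fst e ∉ S ∧ G.snd e ∈ S)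

instance (G : Multigraph V E) (S : Finset V) : DecidablePred (G.InCut S) := fun e =>
  decidable_of_iff ((G.fst e ∈ S ∧ G.snd e ∉ S) ∨ (G.fst e ∉ S ∧ G.snd e ∈ S)) Iff.rfl

/-- `ε(S)`: the number of edges with exactly one endpoint in `S`. -/
def cutCard (G : Multigraph V E) (S : Finset V) : ℕ :=
  (univ.filter fun e => G.InCut S e).card

/-- The genus `g(S) = |E(S)| - |S| + 1 + Σ_{v ∈ S} g_v` of a subset of vertices,
for the vertex weight function `w`. -/
def genusOf (G : Multigraph V E) (w : V → ℕ) (S : Finset V) : ℤ :=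
  ((G.edgesIn S).card : ℤ) - S.card + 1 + ∑ v ∈ S, (w v : ℤ)

/-- The genus of the weighted multigraph. -/
def genus (G : Multigraph V E) (w : V → ℕ) : ℤ := G.genusOf w univ

/-- The valence of a vertex: the number of edge-ends at it (a loop counts twice). -/
def valence (G : Multigraph V E) (v : V) : ℕ :=
  (univ.filter fun e => G.fst e = v).card + (univ.filter fun e => G.snd e = v).card

/-- Adjacency via some edge. -/
def Adj (G : Multigraph V E) (a b : V) : Prop :=
  ∃ e, (G.fst e = a ∧ G.snd e = b) ∨ (G.fst e = b ∧ G.snd e = a)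

/-- The multigraph is connected: nonempty, and any two vertices are joined by a path. -/
def Connected (G : Multigraph V E) : Prop :=
  Nonempty V ∧ ∀ a b : V, Relation.ReflTransGen G.Adj a b

/-- Adjacency inside the induced subgraph on `S` (via an edge of `E(S)`). -/
def AdjOn (G : Multigraph V E) (S : Finset V) (a b : V) : Prop :=
  ∃ e, ((G.fst e = a ∧ G.snd e = b) ∨ (G.fst e = b ∧ G.snd e = a)) ∧
    G.fst e ∈ S ∧ G.snd e ∈ S

/-- The induced subgraph on `S` is connected. -/
def ConnectedOn (G : Multigraph V E) (S : Finset V) : Prop :=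
  ∀ a ∈ S, ∀ b ∈ S, Relation.ReflTransGen (G.AdjOn S) a b

/-- The weighted multigraph is stable: connected, of genus at least 2, and every
vertex of weight 0 has valence at least 3. -/
def IsStable (G : Multigraph V E) (w : V → ℕ) : Prop :=
  G.Connected ∧ 2 ≤ G.genus w ∧ ∀ v, w v = 0 → 3 ≤ G.valence v

/-- A multidegree `d : V → ℤ` of total degree `δ = ∑ v, d v` is semistable if for every
nonempty `S ⊆ V`:
`(2g-2)(g(S)-1) + (δ-g+1)(2g(S)-2+ε(S)) ≤ (2g-2) Σ_{v ∈ S} d v`. -/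
def Semistable (G : Multigraph V E) (w : V → ℕ) (d : V → ℤ) : Prop :=
  ∀ S : Finset V, S.Nonempty →
    (2 * G.genus w - 2) * (G.genusOf w S - 1) +
      ((∑ v, d v) - G.genus w + 1) * (2 * G.genusOf w S - 2 + (G.cutCard S : ℤ)) ≤
    (2 * G.genus w - 2) * ∑ v ∈ S, d v

/-- A multidegree is stable if it is semistable and the semistability inequality is
strict for every nonempty proper subset of vertices. -/
def StableDeg (G : Multigraph V E) (w : V → ℕ) (d : V → ℤ) : Prop :=
  G.Semistable w d ∧ ∀ S : Finset V, S.Nonempty → S ≠ univ →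
    (2 * G.genus w - 2) * (G.genusOf w S - 1) +
      ((∑ v, d v) - G.genus w + 1) * (2 * G.genusOf w S - 2 + (G.cutCard S : ℤ)) <
    (2 * G.genus w - 2) * ∑ v ∈ S, d v

/-- A multidegree is effective if it is nonnegative at every vertex. -/
def Effective (d : V → ℤ) : Prop := ∀ v, 0 ≤ d v

end Multigraph

namespace GraphOrientation

variable {G : Multigraph V E}

/-- The indegree of a vertex: the number of edges with head `v`. -/
def indeg (O : GraphOrientation G) (v : V) : ℕ :=
  (univ.filter fun e => O.head e = v).card

/-- The multidegree `d_O` associated to an orientation: `d_O(v) = g_v - 1 + indeg_O(v)`. -/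
def multidegree (O : GraphOrientation G) (w : V → ℕ) : V → ℤ :=
  fun v => (w v : ℤ) - 1 + (O.indeg v : ℤ)

/-- The edge `e₀` lies on a directed cycle of `O`: there are `k ≥ 1` distinct vertices
`vs` and distinct edges `es`, with `es i` directed from `vs i` to `vs (i+1)`,
one of the edges being `e₀`. -/
def EdgeInCycle (O : GraphOrientation G) (e₀ : E) : Prop :=
  ∃ (k : ℕ) (vs : Fin (k + 1) → V) (es : Fin (k + 1) → E),
    Function.Injective vs ∧ Function.Injective es ∧ (∃ i, es i = e₀) ∧
    ∀ i, O.tail (es i) = vs i ∧ O.head (es i) = vs (i + 1)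

/-- The orientation contains a directed cycle. -/
def HasDirectedCycle (O : GraphOrientation G) : Prop :=
  ∃ (k : ℕ) (vs : Fin (k + 1) → V) (es : Fin (k + 1) → E),
    Function.Injective vs ∧ Function.Injective es ∧
    ∀ i, O.tail (es i) = vs i ∧ O.head (es i) = vs (i + 1)

/-- The orientation is acyclic: it contains no directed cycle. -/
def Acyclic (O : GraphOrientation G) : Prop := ¬ O.HasDirectedCycle

/-- The orientation is totally cyclic: every edge lies on a directed cycle. -/
def TotallyCyclic (O : GraphOrientation G) : Prop := ∀ e, O.EdgeInCycle e

/-- The cut of `S` is directed towards `S`: every edge of the cut has its head in `S`. -/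
def CutTowards (O : GraphOrientation G) (S : Finset V) : Prop :=
  ∀ e, G.InCut S e → O.head e ∈ S

/-- The cut of `S` is directed away from `S`: every edge of the cut has its tail in `S`. -/
def CutAway (O : GraphOrientation G) (S : Finset V) : Prop :=
  ∀ e, G.InCut S e → O.tail e ∈ S

end GraphOrientation


/-!
Write `r(S) = g(S) - 1 - d(S)` for the deficiency of `d` on `S`, so `r(∅) = 0` and
`r(V) = g - 1 - δ`. In degrees `g - 2` and `g - 1`, semistability amounts to `r(S) ≤ 0` on
every proper `S`. Since `1 ≤ 2g(S) - 2 + ε(S) ≤ 2g - 3` on nonempty proper subsets of a stable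
graph, semistability of `d` forces `r(S) ≤ r(V) - 1` there.

Like `g`, the deficiency is supermodular, with a defect of one for every edge joining `S \ T` to
`T \ S`. On a connected graph this makes the proper subsets of maximal deficiency `r(V) - 1` share
a vertex: for a minimal such `M`, every other such `T` with `M ⊄ T` satisfies `M ∪ T = V` with no
edge between `M \ T` and `T \ M`, which fails for a `T` avoiding the inner end of an edge leaving
`M`. Adding one unit of degree at the common vertex lowers `r(V)` and all these deficiencies by one.
After `g - 2 - δ` steps we get `e`; one more unit anywhere gives `e'`.
-/

namespace Multigraph

omit [DecidableEq E]

variable (G : Multigraph V E)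

section

omit [Fintype V]

def crossCard (S T : Finset V) : ℕ :=
  #{e | (G.fst e ∈ S \ T ∧ G.snd e ∈ T \ S) ∨ (G.fst e ∈ T \ S ∧ G.snd e ∈ S \ T)}

lemma card_edgesIn_union_add_card_edgesIn_inter (S T : Finset V) :
    #(G.edgesIn (S ∪ T)) + #(G.edgesIn (S ∩ T)) =
      #(G.edgesIn S) + #(G.edgesIn T) + G.crossCard S T := by
  simp only [edgesIn, crossCard, card_filter, ← sum_add_distrib]
  refine sum_congr rfl fun e _ => ?_
  by_cases h₁ : G.fst e ∈ S <;> by_cases h₂ : G.fst e ∈ T <;>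
    by_cases h₃ : G.snd e ∈ S <;> by_cases h₄ : G.snd e ∈ T <;> simp [h₁, h₂, h₃, h₄]

lemma genusOf_union_add_genusOf_inter (w : V → ℕ) (S T : Finset V) :
    G.genusOf w (S ∪ T) + G.genusOf w (S ∩ T) =
      G.genusOf w S + G.genusOf w T + G.crossCard S T := by
  have hE : (#(G.edgesIn (S ∪ T)) + #(G.edgesIn (S ∩ T)) : ℤ) =
      #(G.edgesIn S) + #(G.edgesIn T) + G.crossCard S T := by
    exact_mod_cast G.card_edgesIn_union_add_card_edgesIn_inter S T
  have hV : (#(S ∪ T) + #(S ∩ T) : ℤ) = #S + #T := by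
    exact_mod_cast card_union_add_card_inter S T
  have hw := sum_union_inter (s₁ := S) (s₂ := T) (f := fun v => (w v : ℤ))
  simp only [genusOf]
  linarith

@[simp]
lemma genusOf_empty (w : V → ℕ) : G.genusOf w ∅ = 1 := by
  simp [genusOf, edgesIn]

lemma crossCard_pos {S T : Finset V} {x y : V} (hx : x ∈ S \ T) (hy : y ∈ T \ S)
    (hxy : G.Adj x y) : 0 < G.crossCard S T := by
  obtain ⟨e, he⟩ := hxy
  refine card_pos.2 ⟨e, mem_filter.2 ⟨mem_univ _, ?_⟩⟩
  rcases he with ⟨rfl, rfl⟩ | ⟨rfl, rfl⟩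
  exacts [Or.inl ⟨hx, hy⟩, Or.inr ⟨hy, hx⟩]

lemma sum_valence (S : Finset V) :
    ∑ v ∈ S, G.valence v = 2 * #(G.edgesIn S) + G.cutCard S := by
  simp only [valence, edgesIn, cutCard, card_filter, sum_add_distrib]
  rw [sum_comm, sum_comm (f := fun x y => if G.snd y = x then 1 else 0), mul_sum,
    ← sum_add_distrib, ← sum_add_distrib]
  refine sum_congr rfl fun e _ => ?_
  by_cases h₁ : G.fst e ∈ S <;> by_cases h₂ : G.snd e ∈ S <;> simp [InCut, h₁, h₂]

/-- The degree of the dualizing sheaf on the subcurve with dual graph `S`. -/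
def canonicalDegree (w : V → ℕ) (S : Finset V) : ℤ :=
  2 * G.genusOf w S - 2 + G.cutCard S

lemma canonicalDegree_eq_sum (w : V → ℕ) (S : Finset V) :
    G.canonicalDegree w S = ∑ v ∈ S, ((G.valence v : ℤ) + 2 * w v - 2) := by
  have h : (∑ v ∈ S, G.valence v : ℤ) = 2 * #(G.edgesIn S) + G.cutCard S := by
    exact_mod_cast G.sum_valence S
  simp only [canonicalDegree, genusOf, sum_sub_distrib, sum_add_distrib, ← mul_sum, sum_const,
    nsmul_eq_mul]
  linarith

variable {G}

omit [Fintype E] in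
lemma Connected.exists_adj_of_mem_of_notMem (hG : G.Connected) {S : Finset V} {x y : V}
    (hx : x ∈ S) (hy : y ∉ S) : ∃ a ∈ S, ∃ b ∉ S, G.Adj a b := by
  induction hG.2 x y with
  | refl => exact absurd hx hy
  | @tail b c _ hbc ih =>
    by_cases hb : b ∈ S
    · exact ⟨b, hb, c, hy, hbc⟩
    · exact ih hb

lemma Connected.valence_pos (hG : G.Connected) {u v : V} (huv : u ≠ v) : 0 < G.valence v := by
  obtain ⟨a, ha, _, _, e, he⟩ :=
    hG.exists_adj_of_mem_of_notMem (mem_singleton_self v) (notMem_singleton.2 huv)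
  rw [mem_singleton] at ha
  subst ha
  rcases he with ⟨h, -⟩ | ⟨-, h⟩
  · exact Nat.add_pos_left (card_pos.2 ⟨e, mem_filter.2 ⟨mem_univ e, h⟩⟩) _
  · exact Nat.add_pos_right _ (card_pos.2 ⟨e, mem_filter.2 ⟨mem_univ e, h⟩⟩)

variable (G) in
def CrossSupermodular (f : Finset V → ℤ) : Prop :=
  ∀ S T, f S + f T + G.crossCard S T ≤ f (S ∪ T) + f (S ∩ T)

lemma crossSupermodular_genusOf_sub_one (w : V → ℕ) :
    G.CrossSupermodular fun S => G.genusOf w S - 1 := fun S T => by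
  linarith [G.genusOf_union_add_genusOf_inter w S T]

lemma CrossSupermodular.sub_sum {f : Finset V → ℤ} (hf : G.CrossSupermodular f) (c : V → ℤ) :
    G.CrossSupermodular fun S => f S - ∑ v ∈ S, c v := fun S T => by
  linarith [hf S T, sum_union_inter (s₁ := S) (s₂ := T) (f := c)]

lemma effective_single (v : V) : Effective (Pi.single v (1 : ℤ)) :=
  (Pi.single_nonneg.2 zero_le_one : (0 : V → ℤ) ≤ Pi.single v 1)

end

lemma cutCard_univ : G.cutCard univ = 0 := by
  simp [cutCard, InCut]

lemma canonicalDegree_univ (w : V → ℕ) : G.canonicalDegree w univ = 2 * G.genus w - 2 := by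
  simp [canonicalDegree, genus, cutCard_univ]

lemma canonicalDegree_add_canonicalDegree_compl (w : V → ℕ) (S : Finset V) :
    G.canonicalDegree w S + G.canonicalDegree w Sᶜ = 2 * G.genus w - 2 := by
  rw [canonicalDegree_eq_sum, canonicalDegree_eq_sum, sum_add_sum_compl, ← canonicalDegree_eq_sum,
    canonicalDegree_univ]

variable {G} {w : V → ℕ}

lemma IsStable.one_le_valence_add (hG : G.IsStable w) {u v : V} (huv : u ≠ v) :
    1 ≤ (G.valence v : ℤ) + 2 * w v - 2 := by
  rcases Nat.eq_zero_or_pos (w v) with h | h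
  · have := hG.2.2 v h
    rw [h]
    omega
  · have := hG.1.valence_pos huv
    omega

lemma IsStable.one_le_canonicalDegree (hG : G.IsStable w) {S : Finset V} (hS : S.Nonempty)
    (hS' : S ≠ univ) : 1 ≤ G.canonicalDegree w S := by
  obtain ⟨x, hx⟩ := hS
  obtain ⟨y, -, hy⟩ := exists_of_ssubset (ssubset_univ_iff.2 hS')
  have : Nontrivial V := ⟨⟨x, y, ne_of_mem_of_not_mem hx hy⟩⟩
  have hpos (v : V) : 1 ≤ (G.valence v : ℤ) + 2 * w v - 2 :=
    hG.one_le_valence_add (exists_ne v).choose_spec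
  rw [canonicalDegree_eq_sum]
  exact (hpos x).trans (single_le_sum (fun v _ => zero_le_one.trans (hpos v)) hx)

lemma IsStable.canonicalDegree_le (hG : G.IsStable w) {S : Finset V} (hS : S.Nonempty)
    (hS' : S ≠ univ) : G.canonicalDegree w S ≤ 2 * G.genus w - 3 := by
  have hSc : Sᶜ.Nonempty := by
    obtain ⟨y, -, hy⟩ := exists_of_ssubset (ssubset_univ_iff.2 hS')
    exact ⟨y, mem_compl.2 hy⟩
  have := hG.one_le_canonicalDegree hSc (by simpa using hS.ne_empty)
  linarith [G.canonicalDegree_add_canonicalDegree_compl w S]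

namespace CrossSupermodular

variable {f : Finset V → ℤ}

lemma exists_mem_of_eq (hG : G.Connected) (hf : G.CrossSupermodular f) (hf₀ : f ∅ = 0)
    {t : ℤ} (ht : 0 < t) (huniv : f univ = t + 1) (hle : ∀ S ≠ univ, f S ≤ t) :
    ∃ v, ∀ S ≠ univ, f S = t → v ∈ S := by
  by_contra! hcon
  obtain ⟨M, ⟨hMuniv, hMt⟩, hMmin⟩ := exists_minimal_of_wellFoundedLT
    (fun S : Finset V => S ≠ univ ∧ f S = t)
    (let ⟨v⟩ := hG.1; (hcon v).imp fun _ h => ⟨h.1, h.2.1⟩)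
  have hcover (T : Finset V) (hT : T ≠ univ) (hTt : f T = t) (hMT : ¬ M ⊆ T) :
      M ∪ T = univ ∧ G.crossCard M T = 0 := by
    have hMT_univ : M ∩ T ≠ univ := fun h => hMuniv (univ_subset_iff.1 (h ▸ inter_subset_left))
    have hlt : f (M ∩ T) < t := by
      refine (hle _ hMT_univ).lt_of_ne fun h => hMT ?_
      exact (hMmin ⟨hMT_univ, h⟩ inter_subset_left).trans inter_subset_right
    have hcross := hf M T
    by_cases hU : M ∪ T = univ
    · rw [hU] at hcross
      exact ⟨hU, by omega⟩
    · linarith [hle _ hU]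
  obtain ⟨x, hxM⟩ : M.Nonempty := nonempty_iff_ne_empty.2 fun h => by
    rw [h, hf₀] at hMt
    omega
  obtain ⟨y, hyM⟩ : ∃ y, y ∉ M := by simpa [eq_univ_iff_forall] using hMuniv
  obtain ⟨a, haM, b, hbM, hab⟩ := hG.exists_adj_of_mem_of_notMem hxM hyM
  obtain ⟨T, hT, hTt, haT⟩ := hcon a
  obtain ⟨hU, hzero⟩ := hcover T hT hTt fun h => haT (h haM)
  have hbT : b ∈ T := (mem_union.1 (hU ▸ mem_univ b)).resolve_left hbM
  exact (G.crossCard_pos (mem_sdiff.2 ⟨haM, haT⟩) (mem_sdiff.2 ⟨hbT, hbM⟩) hab).ne' hzero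

lemma exists_effective_le_sum (hG : G.Connected) (hf : G.CrossSupermodular f) (hf₀ : f ∅ = 0)
    (t : ℕ) (huniv : f univ = t + 1) (hle : ∀ S ≠ univ, f S ≤ t) :
    ∃ e : V → ℤ, Effective e ∧ ∑ v, e v = t ∧ ∀ S ≠ univ, f S ≤ ∑ v ∈ S, e v := by
  induction t generalizing f with
  | zero => exact ⟨0, fun _ => le_rfl, by simp, by simpa using hle⟩
  | succ n ih =>
    push_cast at huniv hle
    obtain ⟨v, hv⟩ := hf.exists_mem_of_eq hG hf₀ (by positivity) huniv hle
    have hsingle (S : Finset V) : ∑ u ∈ S, Pi.single v (1 : ℤ) u = if v ∈ S then 1 else 0 :=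
      sum_pi_single' v 1 S
    obtain ⟨e, he, hsum, hbound⟩ := ih (hf.sub_sum (Pi.single v 1)) (by simp [hf₀])
      (by simp [hsingle, huniv]) fun S hS => by
        have := hle S hS
        by_cases hvS : v ∈ S
        · simp only [hsingle, hvS, if_true]
          omega
        · have : f S ≠ n + 1 := fun h => hvS (hv S hS h)
          simp only [hsingle, hvS, if_false]
          omega
    refine ⟨e + Pi.single v 1, fun u => add_nonneg (he u) (effective_single v u), ?_, fun S hS => ?_⟩
    · simp [sum_add_distrib, hsum, hsingle]
    · have := hbound S hS
      simp only [Pi.add_apply, sum_add_distrib]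
      linarith

end CrossSupermodular

lemma Semistable.genusOf_sub_one_sub_sum_le {d : V → ℤ} (hss : G.Semistable w d)
    (hG : G.IsStable w) (hδ : ∑ v, d v ≤ G.genus w - 2) {S : Finset V} (hS : S ≠ univ) :
    G.genusOf w S - 1 - ∑ v ∈ S, d v ≤ G.genus w - 2 - ∑ v, d v := by
  obtain rfl | hne := S.eq_empty_or_nonempty
  · simp only [genusOf_empty, sum_empty]
    linarith
  have hineq : (2 * G.genus w - 2) * (G.genusOf w S - 1) +
      ((∑ v, d v) - G.genus w + 1) * G.canonicalDegree w S ≤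
      (2 * G.genus w - 2) * ∑ v ∈ S, d v := hss S hne
  have hm₁ := hG.one_le_canonicalDegree hne hS
  have hm₂ := hG.canonicalDegree_le hne hS
  nlinarith

lemma Semistable.exists_effective_sum_eq_genus_sub_two {d : V → ℤ} (hss : G.Semistable w d)
    (hG : G.IsStable w) (hδ : ∑ v, d v ≤ G.genus w - 2) :
    ∃ e : V → ℤ, Effective e ∧ ∑ v, (d v + e v) = G.genus w - 2 ∧
      ∀ S ≠ univ, G.genusOf w S - 1 ≤ ∑ v ∈ S, (d v + e v) := by
  obtain ⟨t, ht⟩ : ∃ t : ℕ, (t : ℤ) = G.genus w - 2 - ∑ v, d v :=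
    ⟨_, Int.toNat_of_nonneg (by linarith)⟩
  obtain ⟨e, he, hsum, hbound⟩ :=
    ((G.crossSupermodular_genusOf_sub_one w).sub_sum d).exists_effective_le_sum hG.1
      (by simp) t (by rw [ht]; simp only [genus]; ring)
      fun S hS => ht ▸ hss.genusOf_sub_one_sub_sum_le hG hδ hS
  refine ⟨e, he, by rw [sum_add_distrib, hsum, ht]; ring, fun S hS => ?_⟩
  rw [sum_add_distrib]
  linarith [hbound S hS]

lemma semistable_of_sum_eq_genus_sub_two {d : V → ℤ} (hG : G.IsStable w)
    (hd : ∑ v, d v = G.genus w - 2) (h : ∀ S ≠ univ, G.genusOf w S - 1 ≤ ∑ v ∈ S, d v) :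
    G.Semistable w d := by
  intro S hS
  change (2 * G.genus w - 2) * (G.genusOf w S - 1) +
      ((∑ v, d v) - G.genus w + 1) * G.canonicalDegree w S ≤ (2 * G.genus w - 2) * ∑ v ∈ S, d v
  have hg := hG.2.1
  by_cases hSu : S = univ
  · subst hSu
    rw [canonicalDegree_univ, hd]
    exact le_of_eq (by simp only [genus] at hd ⊢; ring)
  · have := h S hSu
    have := hG.one_le_canonicalDegree hS hSu
    rw [hd]
    nlinarith

lemma semistable_of_sum_eq_genus_sub_one {d : V → ℤ} (hg : 1 ≤ G.genus w)
    (hd : ∑ v, d v = G.genus w - 1) (h : ∀ S ≠ univ, G.genusOf w S - 1 ≤ ∑ v ∈ S, d v) :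
    G.Semistable w d := by
  intro S _
  rw [hd, show G.genus w - 1 - G.genus w + 1 = 0 by ring, zero_mul, add_zero]
  refine mul_le_mul_of_nonneg_left ?_ (by linarith)
  by_cases hSu : S = univ
  · subst hSu
    exact hd.ge
  · exact h S hSu

end Multigraph

/-- If `d` is a semistable multidegree of total degree `δ ≤ g - 2` on a
stable weighted multigraph, then there are effective multidegrees `e`, `e'` such that
`d + e` is semistable of total degree `g - 2` and `d + e'` is semistable of total
degree `g - 1`. -/
theorem semistable_plus_effective
    (G : Multigraph V E) (w : V → ℕ) (hG : G.IsStable w) (d : V → ℤ)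
    (hss : G.Semistable w d) (hδ : ∑ v, d v ≤ G.genus w - 2) :
    ∃ e e' : V → ℤ, Multigraph.Effective e ∧ Multigraph.Effective e' ∧
      G.Semistable w (fun v => d v + e v) ∧ (∑ v, (d v + e v)) = G.genus w - 2 ∧
      G.Semistable w (fun v => d v + e' v) ∧ (∑ v, (d v + e' v)) = G.genus w - 1 := by
  obtain ⟨e, he, hsum, hle⟩ := hss.exists_effective_sum_eq_genus_sub_two hG hδ
  obtain ⟨v₀⟩ := hG.1.1
  have hsum' : ∑ v, (d v + (e + Pi.single v₀ 1 : V → ℤ) v) = G.genus w - 1 := by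
    simp only [Pi.add_apply, ← add_assoc, sum_add_distrib (f := fun v => d v + e v), hsum,
      sum_pi_single', if_pos (mem_univ v₀)]
    ring
  have hle' (S : Finset V) (hS : S ≠ univ) :
      G.genusOf w S - 1 ≤ ∑ v ∈ S, (d v + (e + Pi.single v₀ 1 : V → ℤ) v) :=
    (hle S hS).trans <| sum_le_sum fun v _ =>
      add_le_add_right (le_add_of_nonneg_right (Multigraph.effective_single v₀ v)) _
  exact ⟨e, e + Pi.single v₀ 1, he, fun v => add_nonneg (he v) (Multigraph.effective_single v₀ v),
    G.semistable_of_sum_eq_genus_sub_two hG hsum hle, hsum,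
    G.semistable_of_sum_eq_genus_sub_one (by linarith [hG.2.1]) hsum' hle', hsum'⟩
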